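/- arXiv:cond-mat/0405321 — 3 statements merged into one kernel-verified Lean document; each statement's English description precedes it below -/
import Mathlib

section
/- For real numbers t_1, ..., t_N and a parameter t, the following polynomial identity holds: ∑_{m=1}^N (-1)^{m-1} · ∏_{1≤j<k≤N, j≠m, k≠m} (t_k - t_j) · (t - t_m)^{N-1} = ∏_{1≤j<k≤N} (t_k - t_j). -/
/-!
Both sides are Vandermonde determinants in disguise. The determinant of the Vandermonde matrix
of `t` is unchanged when every `t i` is shifted by `-s`. Expanding the shifted matrix along its
last column, whose entries are `(t i - s) ^ (N - 1)`, produces the minors, which are again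
(shifted, hence unshifted) Vandermonde determinants of the remaining nodes, i.e. the products
over pairs avoiding `m`.
-/

open Finset Matrix

section Vandermonde

variable {R : Type*} [CommRing R] {n : ℕ}

theorem prod_filter_lt_sub_eq_det_vandermonde (v : Fin n → R) :
    ∏ p ∈ univ.filter (fun p : Fin n × Fin n => p.1 < p.2), (v p.2 - v p.1)
      = (vandermonde v).det := by
  rw [det_vandermonde, prod_finset_product _ univ Ioi (by simp)]

theorem prod_filter_lt_avoiding_eq_prod_succAbove {M : Type*} [CommMonoid M]
    (f : Fin (n + 1) → Fin (n + 1) → M) (m : Fin (n + 1)) :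
    ∏ p ∈ univ.filter
        (fun p : Fin (n + 1) × Fin (n + 1) => p.1 < p.2 ∧ p.1 ≠ m ∧ p.2 ≠ m),
        f p.1 p.2
      = ∏ p ∈ univ.filter (fun p : Fin n × Fin n => p.1 < p.2),
        f (m.succAbove p.1) (m.succAbove p.2) := by
  symm
  refine prod_nbij (fun p => (m.succAbove p.1, m.succAbove p.2)) ?_ ?_ ?_ (fun _ _ => rfl)
  · intro p hp
    simp_all [Fin.succAbove_ne]
  · intro p _ q _ h
    simp only [Prod.mk.injEq] at h
    exact Prod.ext (m.succAbove_right_injective h.1) (m.succAbove_right_injective h.2)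
  · rintro ⟨a, b⟩ hab
    simp only [coe_filter, mem_univ, true_and, Set.mem_ofPred_eq] at hab
    obtain ⟨hlt, ha, hb⟩ := hab
    obtain ⟨a', rfl⟩ := Fin.exists_succAbove_eq ha
    obtain ⟨b', rfl⟩ := Fin.exists_succAbove_eq hb
    exact ⟨(a', b'), by simpa using hlt, rfl⟩

theorem prod_filter_lt_avoiding_sub_eq_det_vandermonde (v : Fin (n + 1) → R) (m : Fin (n + 1)) :
    ∏ p ∈ univ.filter
        (fun p : Fin (n + 1) × Fin (n + 1) => p.1 < p.2 ∧ p.1 ≠ m ∧ p.2 ≠ m),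
        (v p.2 - v p.1)
      = (vandermonde (v ∘ m.succAbove)).det := by
  rw [prod_filter_lt_avoiding_eq_prod_succAbove (fun j k => v k - v j),
    ← prod_filter_lt_sub_eq_det_vandermonde]
  rfl

theorem vandermonde_submatrix_succAbove_castSucc (v : Fin (n + 1) → R) (i : Fin (n + 1)) :
    (vandermonde v).submatrix i.succAbove Fin.castSucc = vandermonde (v ∘ i.succAbove) := by
  ext a b
  simp [vandermonde_apply]

theorem det_vandermonde_eq_sum_succAbove (v : Fin (n + 1) → R) (s : R) :
    (vandermonde v).det =
      ∑ i : Fin (n + 1),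
        (-1) ^ (i : ℕ) * (vandermonde (v ∘ i.succAbove)).det * (s - v i) ^ n := by
  rw [← det_vandermonde_sub v s, det_succ_column _ (Fin.last n)]
  refine sum_congr rfl fun i _ => ?_
  rw [Fin.succAbove_last, vandermonde_submatrix_succAbove_castSucc, Function.comp_def,
    det_vandermonde_sub, vandermonde_apply, Fin.val_last, pow_add,
    mul_assoc ((-1) ^ (i : ℕ)), ← mul_pow, neg_one_mul, neg_sub, ← Function.comp_def]
  ring

end Vandermonde

/-- For real numbers `t 0, …, t (N-1)` (representing `t_1, …, t_N`) and a
parameter `s`, one has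
`∑_{m} (-1)^m ∏_{j<k, j≠m, k≠m} (t k - t j) (s - t m)^{N-1} = ∏_{j<k} (t k - t j)`. -/
theorem vandermonde_expansion_identity (N : ℕ) (hN : 1 ≤ N) (t : Fin N → ℝ) (s : ℝ) :
    ∑ m : Fin N, (-1 : ℝ) ^ (m : ℕ) *
      (∏ p ∈ Finset.univ.filter
          (fun p : Fin N × Fin N => p.1 < p.2 ∧ p.1 ≠ m ∧ p.2 ≠ m),
        (t p.2 - t p.1)) * (s - t m) ^ (N - 1)
    = ∏ p ∈ Finset.univ.filter (fun p : Fin N × Fin N => p.1 < p.2), (t p.2 - t p.1) := by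
  obtain ⟨n, rfl⟩ : ∃ n, N = n + 1 := ⟨N - 1, by omega⟩
  simp_rw [prod_filter_lt_avoiding_sub_eq_det_vandermonde, prod_filter_lt_sub_eq_det_vandermonde,
    Nat.add_sub_cancel]
  exact (det_vandermonde_eq_sum_succAbove t s).symm
end

section
/- Define F_n(m; t) = e^{-t} (t^m / m!) ∑_{k=0}^∞ [(n)_k / (m+1)_k] (t^k / k!), where (a)_k = a(a+1)⋯(a+k-1) is the Pochhammer symbol. Then for all integers n, m with m ≥ 0 and all t ≥ 0, ∫_0^t F_n(m; s) ds = F_{n+1}(m+1; t) − F_{n+1}(m+1; 0). -/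
open MeasureTheory

/-- The Pochhammer symbol `(a)_k = a (a+1) ⋯ (a+k-1)`. -/
noncomputable def poch (a : ℝ) (k : ℕ) : ℝ := ∏ i ∈ Finset.range k, (a + i)

/-- Schütz's function `F_n(m;t) = e^{-t} (t^m/m!) ∑_{k≥0} [(n)_k/(m+1)_k] t^k/k!`. -/
noncomputable def schuetzF (n : ℤ) (m : ℕ) (t : ℝ) : ℝ :=
  Real.exp (-t) * t ^ m / (m.factorial : ℝ) *
    ∑' k : ℕ, poch (n : ℝ) k / poch ((m : ℝ) + 1) k * t ^ k / (k.factorial : ℝ)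

/-! Expanding `(m+1)_k` against `m!` writes `F_n(m;t) = ∑_k (n)_k/k! · p_{m+k}(t)` with the Poisson
weights `p_j(t) = e^{-t} t^j/j!`, which satisfy `p_{j+1}' = p_j - p_{j+1}`. The Pascal-type rule
`(n)_{k+1}/(k+1)! = (n+1)_{k+1}/(k+1)! - (n+1)_k/k!` turns this into the contiguous relation
`F_n(m) = F_{n+1}(m) - F_{n+1}(m+1)`, whose `k`-th term is the derivative of the `k`-th term of
`F_{n+1}(m+1)`. Since `|(n)_k/k!| ≤ (|n|+1)^k`, the series is dominated on `[0,t]` by an exponential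
series and may be integrated term by term. -/

open Nat

theorem hasSum_intervalIntegral_of_norm_le {ι E : Type*} [Countable ι] [NormedAddCommGroup E]
    [NormedSpace ℝ E] {F : ι → ℝ → E} {f : ℝ → E} {u : ι → ℝ} {a b : ℝ}
    (hF : ∀ k, Continuous (F k)) (hu : Summable u)
    (hFu : ∀ k, ∀ s ∈ Set.uIoc a b, ‖F k s‖ ≤ u k)
    (hf : ∀ s ∈ Set.uIoc a b, HasSum (fun k => F k s) (f s)) :
    HasSum (fun k => ∫ s in a..b, F k s) (∫ s in a..b, f s) :=
  intervalIntegral.hasSum_integral_of_dominated_convergence (fun k _ => u k)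
    (fun k => (hF k).aestronglyMeasurable) (fun k => .of_forall (hFu k))
    (.of_forall fun _ _ => hu) intervalIntegrable_const (.of_forall hf)

lemma poch_zero (a : ℝ) : poch a 0 = 1 := Finset.prod_range_zero _

lemma poch_succ (a : ℝ) (k : ℕ) : poch a (k + 1) = poch a k * (a + k) :=
  Finset.prod_range_succ _ _

lemma poch_succ' (a : ℝ) (k : ℕ) : poch a (k + 1) = a * poch (a + 1) k := by
  rw [poch, Finset.prod_range_succ', Nat.cast_zero, add_zero, mul_comm, poch]
  congr 1
  refine Finset.prod_congr rfl fun i _ => ?_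
  push_cast
  ring

lemma factorial_add_eq_mul_poch (m k : ℕ) : ((m + k)! : ℝ) = m ! * poch (m + 1) k := by
  induction k with
  | zero => simp [poch_zero]
  | succ k ih =>
    rw [← add_assoc, factorial_succ, poch_succ]
    push_cast [ih]
    ring

lemma abs_poch_le (a : ℝ) (k : ℕ) : |poch a k| ≤ (|a| + 1) ^ k * k ! := by
  induction k with
  | zero => simp [poch_zero]
  | succ k ih =>
    have hlin : |a + k| ≤ (|a| + 1) * (k + 1) := by
      have := abs_add_le a k
      rw [Nat.abs_cast] at this
      nlinarith [abs_nonneg a, (k.cast_nonneg : (0 : ℝ) ≤ k)]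
    rw [poch_succ, abs_mul, factorial_succ]
    push_cast
    calc |poch a k| * |a + k| ≤ ((|a| + 1) ^ k * k !) * ((|a| + 1) * (k + 1)) := by gcongr
      _ = _ := by ring

lemma poch_div_factorial_succ (a : ℝ) (k : ℕ) :
    poch a (k + 1) / (k + 1)! = poch (a + 1) (k + 1) / (k + 1)! - poch (a + 1) k / k ! := by
  rw [poch_succ', poch_succ, factorial_succ]
  push_cast
  field_simp
  ring

noncomputable def poissonWeight (j : ℕ) (s : ℝ) : ℝ := Real.exp (-s) * s ^ j / j !

lemma continuous_poissonWeight (j : ℕ) : Continuous (poissonWeight j) := by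
  unfold poissonWeight
  fun_prop

lemma poissonWeight_succ_zero (j : ℕ) : poissonWeight (j + 1) 0 = 0 := by
  simp [poissonWeight]

lemma hasDerivAt_poissonWeight_succ (j : ℕ) (s : ℝ) :
    HasDerivAt (poissonWeight (j + 1)) (poissonWeight j s - poissonWeight (j + 1) s) s := by
  have h := (((hasDerivAt_neg s).exp).mul (hasDerivAt_pow (j + 1) s)).div_const ((j + 1)! : ℝ)
  refine h.congr_deriv ?_
  simp only [poissonWeight, factorial_succ]
  push_cast
  field_simp
  ring

lemma abs_poissonWeight_le (j : ℕ) {r s : ℝ} (hs : |s| ≤ r) :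
    |poissonWeight j s| ≤ Real.exp r * r ^ j / j ! := by
  rw [poissonWeight, abs_div, abs_mul, Real.abs_exp, abs_pow, Nat.abs_cast]
  have hexp : Real.exp (-s) ≤ Real.exp r := Real.exp_le_exp.2 (by linarith [neg_le_abs s])
  gcongr

noncomputable def schuetzTerm (a : ℝ) (m k : ℕ) (s : ℝ) : ℝ :=
  poch a k / k ! * poissonWeight (m + k) s

lemma continuous_schuetzTerm (a : ℝ) (m k : ℕ) : Continuous (schuetzTerm a m k) :=
  continuous_const.mul (continuous_poissonWeight _)

lemma abs_schuetzTerm_le (a : ℝ) (m k : ℕ) {r s : ℝ} (hs : |s| ≤ r) :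
    |schuetzTerm a m k s| ≤ Real.exp r * r ^ m * ((|a| + 1) * r) ^ k / k ! := by
  have hr : 0 ≤ r := (abs_nonneg s).trans hs
  have hk : (0 : ℝ) < k ! := by positivity
  have hfact : (k ! : ℝ) ≤ (m + k)! := by exact_mod_cast factorial_le (Nat.le_add_left k m)
  have hcoeff : |poch a k / k !| ≤ (|a| + 1) ^ k := by
    rw [abs_div, Nat.abs_cast, div_le_iff₀ hk]
    exact abs_poch_le a k
  calc |schuetzTerm a m k s| ≤ (|a| + 1) ^ k * (Real.exp r * r ^ (m + k) / (m + k)!) := by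
        rw [schuetzTerm, abs_mul]
        exact mul_le_mul hcoeff (abs_poissonWeight_le _ hs) (abs_nonneg _) (by positivity)
    _ ≤ (|a| + 1) ^ k * (Real.exp r * r ^ (m + k) / k !) := by gcongr
    _ = _ := by rw [mul_pow]; ring

lemma summable_schuetzTerm_bound (a r : ℝ) (m : ℕ) :
    Summable fun k : ℕ => Real.exp r * r ^ m * ((|a| + 1) * r) ^ k / k ! := by
  simpa only [mul_div_assoc] using (Real.summable_pow_div_factorial _).mul_left _

lemma summable_schuetzTerm (a : ℝ) (m : ℕ) (s : ℝ) : Summable fun k => schuetzTerm a m k s :=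
  (summable_schuetzTerm_bound a |s| m).of_norm_bounded fun k =>
    abs_schuetzTerm_le a m k le_rfl

lemma schuetzTerm_zero (a : ℝ) (m : ℕ) (s : ℝ) : schuetzTerm a m 0 s = poissonWeight m s := by
  simp [schuetzTerm, poch_zero]

lemma schuetzTerm_succ (a : ℝ) (m k : ℕ) (s : ℝ) :
    schuetzTerm a m (k + 1) s =
      schuetzTerm (a + 1) m (k + 1) s - schuetzTerm (a + 1) (m + 1) k s := by
  rw [schuetzTerm, schuetzTerm, schuetzTerm, poch_div_factorial_succ, add_right_comm m 1 k,
    ← add_assoc]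
  ring

lemma tsum_schuetzTerm_eq_sub (a : ℝ) (m : ℕ) (s : ℝ) :
    ∑' k, schuetzTerm a m k s =
      ∑' k, schuetzTerm (a + 1) m k s - ∑' k, schuetzTerm (a + 1) (m + 1) k s := by
  have hsucc := (summable_nat_add_iff 1).2 (summable_schuetzTerm (a + 1) m s)
  rw [(summable_schuetzTerm a m s).tsum_eq_zero_add,
    (summable_schuetzTerm (a + 1) m s).tsum_eq_zero_add, schuetzTerm_zero, schuetzTerm_zero,
    tsum_congr (schuetzTerm_succ a m · s), hsucc.tsum_sub (summable_schuetzTerm (a + 1) (m + 1) s)]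
  ring

lemma hasDerivAt_schuetzTerm_succ (a : ℝ) (m k : ℕ) (s : ℝ) :
    HasDerivAt (schuetzTerm a (m + 1) k)
      (schuetzTerm a m k s - schuetzTerm a (m + 1) k s) s := by
  have h := (hasDerivAt_poissonWeight_succ (m + k) s).const_mul (poch a k / k !)
  rw [add_right_comm] at h
  rw [schuetzTerm, schuetzTerm, ← mul_sub]
  exact h

lemma integral_schuetzTerm_sub (a : ℝ) (m k : ℕ) (t : ℝ) :
    ∫ s in (0 : ℝ)..t, (schuetzTerm a m k s - schuetzTerm a (m + 1) k s) =
      schuetzTerm a (m + 1) k t := by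
  rw [intervalIntegral.integral_eq_sub_of_hasDerivAt
    (fun s _ => hasDerivAt_schuetzTerm_succ a m k s)
    (((continuous_schuetzTerm a m k).sub
      (continuous_schuetzTerm a (m + 1) k)).intervalIntegrable 0 t)]
  simp [schuetzTerm, add_right_comm m 1 k, poissonWeight_succ_zero]

lemma schuetzF_eq_tsum (n : ℤ) (m : ℕ) (s : ℝ) :
    schuetzF n m s = ∑' k, schuetzTerm n m k s := by
  rw [schuetzF, ← tsum_mul_left]
  refine tsum_congr fun k => ?_
  have hp : poch ((m : ℝ) + 1) k ≠ 0 :=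
    Finset.prod_ne_zero_iff.2 fun i _ => by positivity
  rw [schuetzTerm, poissonWeight, factorial_add_eq_mul_poch, pow_add]
  field_simp

lemma schuetzF_eq_sub (n : ℤ) (m : ℕ) (s : ℝ) :
    schuetzF n m s = schuetzF (n + 1) m s - schuetzF (n + 1) (m + 1) s := by
  simp only [schuetzF_eq_tsum, Int.cast_add, Int.cast_one]
  exact tsum_schuetzTerm_eq_sub _ m s

theorem integral_schuetzF_general (n : ℤ) (m : ℕ) (t : ℝ) :
    ∫ s in (0:ℝ)..t, schuetzF n m s
      = schuetzF (n + 1) (m + 1) t - schuetzF (n + 1) (m + 1) 0 := by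
  set a : ℝ := ((n + 1 : ℤ) : ℝ)
  have hterms : HasSum
      (fun k => ∫ s in (0:ℝ)..t, (schuetzTerm a m k s - schuetzTerm a (m + 1) k s))
      (∫ s in (0:ℝ)..t, schuetzF n m s) := by
    refine hasSum_intervalIntegral_of_norm_le
      (fun k => (continuous_schuetzTerm a m k).sub (continuous_schuetzTerm a (m + 1) k))
      ((summable_schuetzTerm_bound a |t| m).add (summable_schuetzTerm_bound a |t| (m + 1)))
      (fun k s hs => ?_) (fun s _ => ?_)
    · have hst : |s| ≤ |t| := by
        simpa using Set.abs_sub_left_of_mem_uIcc (Set.uIoc_subset_uIcc hs)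
      exact (norm_sub_le _ _).trans
        (add_le_add (abs_schuetzTerm_le a m k hst) (abs_schuetzTerm_le a (m + 1) k hst))
    · rw [schuetzF_eq_sub, schuetzF_eq_tsum, schuetzF_eq_tsum]
      exact (summable_schuetzTerm a m s).hasSum.sub (summable_schuetzTerm a (m + 1) s).hasSum
  have hF0 : schuetzF (n + 1) (m + 1) 0 = 0 := by simp [schuetzF]
  rw [hF0, sub_zero, ← hterms.tsum_eq, schuetzF_eq_tsum]
  exact tsum_congr fun k => integral_schuetzTerm_sub a m k t

/-- `∫_0^t F_n(m;s) ds = F_{n+1}(m+1;t) − F_{n+1}(m+1;0)`. -/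
theorem integral_schuetzF (n : ℤ) (m : ℕ) (t : ℝ) (ht : 0 ≤ t) :
    ∫ s in (0:ℝ)..t, schuetzF n m s
      = schuetzF (n + 1) (m + 1) t - schuetzF (n + 1) (m + 1) 0 :=
  integral_schuetzF_general n m t
end

section
/- For the choice c_j(t) = t^j (j ≤ N-1), d_j(t) = t^j (j ≤ N-2), d_{N-1}(t) = t^K, w(t) = t^α e^{-t} with α = M − K − 1 and K = N + Y − 1 ≥ N − 1, the biorthogonal partner D_{N-1} is given by D_{N-1}(t) = Γ(M) ∑_{j=N-1}^K [(-K)_j / Γ(M − K + j)] L_j^{(α)}(t), and the pairing constant is h_{N-1} = ⟨C_{N-1}, D_{N-1}⟩ = (-1)^{N-1} Γ(M) (-K)_{N-1}. -/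
open MeasureTheory

/-- The generalized Laguerre function, defined via the Rodrigues formula
`L_j^{(α)}(x) = (x^{-α} e^x / j!) dⁿ/dxⁿ [e^{-x} x^{j+α}]` (valid for `x > 0`). -/
noncomputable def laguerre (α : ℝ) (j : ℕ) (x : ℝ) : ℝ :=
  x ^ (-α) * Real.exp x / (j.factorial : ℝ) *
    iteratedDeriv j (fun y : ℝ => Real.exp (-y) * y ^ ((j : ℝ) + α)) x

/-!
For integral `α = b` the Rodrigues formula and the Leibniz rule make `L_j^{(b)}` an explicit
polynomial, and the factors `Γ(M) (-K)_j / Γ(M - K + j)` turn out to be exactly the coefficients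
of the Laguerre expansion `x^K = ∑_{j ≤ K} e_j L_j^{(b)}`. Hence
`D_{N-1} = x^K - ∑_{j < N-1} e_j L_j^{(b)}`, which is monic of degree `K` with no terms between
`x^{N-2}` and `x^K`. Orthogonality `∫ L_i L_j x^b e^{-x} = δ_{ij} (j+b)!/j!` then gives both the
vanishing pairings and `h_{N-1}`. Orthogonality itself reduces to the moments
`∫ x^k L_j x^b e^{-x} = ∑_m c_{jm} (k+b+m)!`, `c_{jm}` the coefficients of `L_j^{(b)}`: up to a
constant these are `j`-th finite differences of a polynomial of degree `k` in `m`, hence vanish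
for `k < j`.
-/

open Finset

noncomputable def laguerreCoeff (b j k : ℕ) : ℝ :=
  (-1) ^ k * j.choose k * (j + b).descFactorial (j - k) / j.factorial

lemma iteratedDeriv_exp_neg_mul_pow (j n : ℕ) (x : ℝ) :
    iteratedDeriv j (fun y => Real.exp (-y) * y ^ n) x
      = ∑ i ∈ range (j + 1), j.choose i * ((-1) ^ i * Real.exp (-x))
          * (n.descFactorial (j - i) * x ^ (n - (j - i))) := by
  have hexp : (fun y : ℝ => Real.exp (-y)) = fun y => Real.exp (-1 * y) := by
    simp only [neg_one_mul]
  rw [iteratedDeriv_fun_mul (by fun_prop) (by fun_prop)]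
  simp only [hexp, iteratedDeriv_exp_const_mul, iteratedDeriv_pow, neg_one_mul]

lemma laguerre_natCast_eq_sum (b j : ℕ) {x : ℝ} (hx : 0 < x) :
    laguerre b j x = ∑ k ∈ range (j + 1), laguerreCoeff b j k * x ^ k := by
  have hpow : (fun y : ℝ => Real.exp (-y) * y ^ ((j : ℝ) + b))
      = fun y => Real.exp (-y) * y ^ (j + b) := by
    funext y
    rw [← Real.rpow_natCast]
    push_cast
    rfl
  rw [laguerre, hpow, iteratedDeriv_exp_neg_mul_pow, mul_sum]
  refine sum_congr rfl fun k hk => ?_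
  have hkj : k ≤ j := Nat.lt_succ_iff.mp (mem_range.mp hk)
  rw [show j + b - (j - k) = b + k by omega, Real.rpow_neg hx.le, Real.rpow_natCast, pow_add,
    laguerreCoeff, Real.exp_neg]
  field_simp

lemma laguerre_natCast_eq_sum_range (b : ℕ) {j n : ℕ} (hjn : j < n) {x : ℝ} (hx : 0 < x) :
    laguerre b j x = ∑ k ∈ range n, laguerreCoeff b j k * x ^ k := by
  rw [laguerre_natCast_eq_sum b j hx]
  refine sum_subset (range_subset_range.2 hjn) fun k _ hk => ?_
  rw [laguerreCoeff, Nat.choose_eq_zero_of_lt (by simpa using hk)]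
  simp

lemma sum_mul_laguerre_eq_sum_pow (b n : ℕ) (e : ℕ → ℝ) {x : ℝ} (hx : 0 < x) :
    ∑ j ∈ range n, e j * laguerre b j x
      = ∑ i ∈ range n, (∑ j ∈ range n, e j * laguerreCoeff b j i) * x ^ i := by
  simp_rw [sum_mul]
  rw [sum_comm]
  refine sum_congr rfl fun j hj => ?_
  rw [laguerre_natCast_eq_sum_range b (mem_range.mp hj) hx, mul_sum]
  simp only [mul_assoc]

open Polynomial in
lemma sum_neg_one_pow_mul_choose_mul_eval {n : ℕ} {P : ℝ[X]} (hP : P.natDegree ≤ n) :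
    ∑ m ∈ range (n + 1), (-1) ^ m * n.choose m * P.eval (m : ℝ)
      = (-1) ^ n * n.factorial * P.coeff n := by
  have hΔ : (fwdDiff 1)^[n] P.eval 0 = n.factorial * P.coeff n := by
    rcases hP.lt_or_eq with hlt | rfl
    · simp [fwdDiff_iter_eq_zero_of_degree_lt hlt, coeff_eq_zero_of_natDegree_lt hlt]
    · rw [P.fwdDiff_iter_degree_eq_factorial, ← leadingCoeff]
      simp [mul_comm]
  rw [mul_assoc, ← hΔ, fwdDiff_iter_eq_sum_shift, mul_sum]
  refine sum_congr rfl fun m hm => ?_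
  have hmn : m ≤ n := Nat.lt_succ_iff.mp (mem_range.mp hm)
  have hsign : (-1 : ℝ) ^ n * (-1) ^ (n - m) = (-1) ^ m := by
    rw [← pow_add, show n + (n - m) = m + 2 * (n - m) by omega, pow_add, pow_mul]
    norm_num
  simp only [zsmul_eq_mul, zero_add, nsmul_eq_mul, mul_one]
  push_cast
  rw [← hsign]
  ring

open Polynomial in
lemma sum_laguerreCoeff_mul_factorial (b : ℕ) {j k : ℕ} (hkj : k ≤ j) :
    ∑ m ∈ range (j + 1), laguerreCoeff b j m * (k + b + m).factorial
      = if k = j then (-1 : ℝ) ^ j * (j + b).factorial else 0 := by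
  -- `(k + b + m)! / (b + m)!` is a monic polynomial of degree `k` in `m`
  set P : ℝ[X] := (ascPochhammer ℝ k).comp (X + C ((b : ℝ) + 1)) with hP
  have hPmonic : P.Monic := (monic_ascPochhammer ℝ k).comp_X_add_C _
  have hPdeg : P.natDegree = k := by
    rw [hP, natDegree_comp, ascPochhammer_natDegree, natDegree_X_add_C, mul_one]
  have hPeval (m : ℕ) : ((b + m).factorial : ℝ) * P.eval (m : ℝ) = (k + b + m).factorial := by
    rw [hP, eval_comp, eval_add, eval_X, eval_C,
      show (m : ℝ) + (b + 1) = ((b + m + 1 : ℕ) : ℝ) by push_cast; ring,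
      ascPochhammer_nat_eq_natCast_ascFactorial, show k + b + m = b + m + k by ring]
    exact_mod_cast Nat.factorial_mul_ascFactorial (b + m) k
  have hterm : ∀ m ∈ range (j + 1), laguerreCoeff b j m * (k + b + m).factorial
      = (j + b).factorial / j.factorial * ((-1) ^ m * j.choose m * P.eval (m : ℝ)) := by
    intro m hm
    have hmj : m ≤ j := Nat.lt_succ_iff.mp (mem_range.mp hm)
    have hdesc : ((b + m).factorial : ℝ) * (j + b).descFactorial (j - m) = (j + b).factorial := by
      exact_mod_cast (show j + b - (j - m) = b + m by omega) ▸
        Nat.factorial_mul_descFactorial (show j - m ≤ j + b by omega)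
    rw [laguerreCoeff, ← hPeval, ← hdesc]
    field_simp
  rw [sum_congr rfl hterm, ← mul_sum, sum_neg_one_pow_mul_choose_mul_eval (hPdeg ▸ hkj)]
  split_ifs with hk
  · subst hk
    rw [show P.coeff k = 1 from hPdeg ▸ hPmonic.coeff_natDegree]
    field_simp
  · rw [coeff_eq_zero_of_natDegree_lt (by omega)]
    ring

lemma integrableOn_pow_mul_exp_neg (n : ℕ) :
    IntegrableOn (fun x : ℝ => x ^ n * Real.exp (-x)) (Set.Ioi 0) := by
  convert Real.GammaIntegral_convergent (s := n + 1) (by positivity) using 2 with x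
  rw [add_sub_cancel_right, Real.rpow_natCast, mul_comm]

lemma integral_pow_mul_exp_neg (n : ℕ) :
    ∫ x in Set.Ioi (0 : ℝ), x ^ n * Real.exp (-x) = n.factorial := by
  rw [← Real.Gamma_nat_eq_factorial, Real.Gamma_eq_integral (by positivity)]
  refine setIntegral_congr_fun measurableSet_Ioi fun x _ => ?_
  rw [add_sub_cancel_right, Real.rpow_natCast, mul_comm]

lemma pow_mul_laguerre_mul_weight_eq_sum (b j k : ℕ) {x : ℝ} (hx : 0 < x) :
    x ^ k * laguerre b j x * (x ^ b * Real.exp (-x))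
      = ∑ m ∈ range (j + 1), laguerreCoeff b j m * (x ^ (k + b + m) * Real.exp (-x)) := by
  rw [laguerre_natCast_eq_sum b j hx, mul_sum, sum_mul]
  refine sum_congr rfl fun m _ => by ring

lemma integrableOn_pow_mul_laguerre_mul_weight (b j k : ℕ) :
    IntegrableOn (fun x => x ^ k * laguerre b j x * (x ^ b * Real.exp (-x))) (Set.Ioi 0) := by
  refine IntegrableOn.congr_fun ?_
    (fun x hx => (pow_mul_laguerre_mul_weight_eq_sum b j k hx).symm) measurableSet_Ioi
  exact integrable_finsetSum _ fun m _ => (integrableOn_pow_mul_exp_neg _).const_mul _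

lemma integral_pow_mul_laguerre_mul_weight (b : ℕ) {j k : ℕ} (hkj : k ≤ j) :
    ∫ x in Set.Ioi 0, x ^ k * laguerre b j x * (x ^ b * Real.exp (-x))
      = if k = j then (-1 : ℝ) ^ j * (j + b).factorial else 0 := by
  rw [setIntegral_congr_fun measurableSet_Ioi
      (fun x hx => pow_mul_laguerre_mul_weight_eq_sum b j k hx),
    integral_finsetSum _ fun m _ => (integrableOn_pow_mul_exp_neg _).const_mul _,
    ← sum_laguerreCoeff_mul_factorial b hkj]
  refine sum_congr rfl fun m _ => ?_
  rw [integral_const_mul, integral_pow_mul_exp_neg]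

lemma laguerre_mul_laguerre_mul_weight_eq_sum (b i j : ℕ) {x : ℝ} (hx : 0 < x) :
    laguerre b i x * laguerre b j x * (x ^ b * Real.exp (-x))
      = ∑ k ∈ range (i + 1),
          laguerreCoeff b i k * (x ^ k * laguerre b j x * (x ^ b * Real.exp (-x))) := by
  rw [laguerre_natCast_eq_sum b i hx, sum_mul, sum_mul]
  refine sum_congr rfl fun k _ => by ring

lemma integrableOn_laguerre_mul_laguerre_mul_weight (b i j : ℕ) :
    IntegrableOn (fun x => laguerre b i x * laguerre b j x * (x ^ b * Real.exp (-x)))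
      (Set.Ioi 0) := by
  refine IntegrableOn.congr_fun ?_
    (fun x hx => (laguerre_mul_laguerre_mul_weight_eq_sum b i j hx).symm) measurableSet_Ioi
  exact integrable_finsetSum _ fun k _ =>
    (integrableOn_pow_mul_laguerre_mul_weight b j k).const_mul _

lemma integral_laguerre_mul_laguerre_mul_weight_of_le (b : ℕ) {i j : ℕ} (hij : i ≤ j) :
    ∫ x in Set.Ioi 0, laguerre b i x * laguerre b j x * (x ^ b * Real.exp (-x))
      = if i = j then ((j + b).factorial : ℝ) / j.factorial else 0 := by
  rw [setIntegral_congr_fun measurableSet_Ioi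
      (fun x hx => laguerre_mul_laguerre_mul_weight_eq_sum b i j hx),
    integral_finsetSum _ fun k _ => (integrableOn_pow_mul_laguerre_mul_weight b j k).const_mul _]
  have hmoment : ∀ k ∈ range (i + 1),
      ∫ x in Set.Ioi 0, laguerreCoeff b i k * (x ^ k * laguerre b j x * (x ^ b * Real.exp (-x)))
        = if k = j then laguerreCoeff b i k * ((-1 : ℝ) ^ j * (j + b).factorial) else 0 := by
    intro k hk
    rw [integral_const_mul, integral_pow_mul_laguerre_mul_weight b
      ((Nat.lt_succ_iff.mp (mem_range.mp hk)).trans hij)]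
    split_ifs <;> simp
  rw [sum_congr rfl hmoment, sum_ite_eq']
  by_cases hji : i = j
  · subst hji
    rw [if_pos (self_mem_range_succ i), if_pos rfl, laguerreCoeff, Nat.choose_self, Nat.sub_self,
      Nat.descFactorial_zero]
    field_simp
    simp [← pow_mul]
  · rw [if_neg (by simp only [mem_range]; omega), if_neg hji]

lemma integral_laguerre_mul_laguerre_mul_weight (b i j : ℕ) :
    ∫ x in Set.Ioi 0, laguerre b i x * laguerre b j x * (x ^ b * Real.exp (-x))
      = if i = j then ((j + b).factorial : ℝ) / j.factorial else 0 := by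
  rcases le_total i j with hij | hji
  · exact integral_laguerre_mul_laguerre_mul_weight_of_le b hij
  · simp_rw [mul_comm (laguerre b i _) (laguerre b j _)]
    rw [integral_laguerre_mul_laguerre_mul_weight_of_le b hji]
    rcases eq_or_ne i j with rfl | hne
    · rfl
    · rw [if_neg hne.symm, if_neg hne]

lemma integral_laguerre_mul_sum_mul_weight (b i : ℕ) (s : Finset ℕ) (e : ℕ → ℝ) :
    ∫ x in Set.Ioi 0,
        laguerre b i x * (∑ j ∈ s, e j * laguerre b j x) * (x ^ b * Real.exp (-x))
      = if i ∈ s then e i * ((i + b).factorial / i.factorial) else 0 := by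
  have hexpand (x : ℝ) :
      laguerre b i x * (∑ j ∈ s, e j * laguerre b j x) * (x ^ b * Real.exp (-x))
        = ∑ j ∈ s, e j * (laguerre b i x * laguerre b j x * (x ^ b * Real.exp (-x))) := by
    rw [mul_sum, sum_mul]
    exact sum_congr rfl fun j _ => by ring
  simp_rw [hexpand]
  rw [integral_finsetSum _ fun j _ =>
    (integrableOn_laguerre_mul_laguerre_mul_weight b i j).const_mul _]
  simp_rw [integral_const_mul, integral_laguerre_mul_laguerre_mul_weight, mul_ite, mul_zero]
  rw [sum_ite_eq]

noncomputable def powLaguerreCoeff (b n j : ℕ) : ℝ :=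
  (-1) ^ j * (n + b).factorial * n.descFactorial j / (b + j).factorial

lemma powLaguerreCoeff_mul_laguerreCoeff (b n m r : ℕ) :
    powLaguerreCoeff b n (m + r) * laguerreCoeff b (m + r) m
      = (n + b).factorial / (b + m).factorial * n.choose m * ((-1) ^ r * (n - m).choose r) := by
  have hdesc : (b + m).factorial * (m + r + b).descFactorial r = (b + (m + r)).factorial := by
    rw [show b + (m + r) = m + r + b by omega, show b + m = m + r + b - r by omega]
    exact Nat.factorial_mul_descFactorial (by omega)
  have hchoose : n.descFactorial (m + r) * (m + r).choose m
      = (m + r).factorial * (n.choose m * (n - m).choose r) := by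
    rw [Nat.descFactorial_eq_factorial_mul_choose, mul_assoc,
      Nat.choose_mul (Nat.le_add_right m r), Nat.add_sub_cancel_left]
  have hsign : (-1 : ℝ) ^ (m + r) * (-1) ^ m = (-1) ^ r := by
    rw [← pow_add, show m + r + m = r + 2 * m by omega, pow_add, pow_mul]
    norm_num
  rw [powLaguerreCoeff, laguerreCoeff, Nat.add_sub_cancel_left, ← hdesc]
  have hchooseR := congrArg (Nat.cast : ℕ → ℝ) hchoose
  have hdesc_ne : ((m + r + b).descFactorial r : ℝ) ≠ 0 :=
    Nat.cast_ne_zero.mpr (Nat.descFactorial_pos.mpr (by omega)).ne'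
  push_cast at hchooseR ⊢
  field_simp
  linear_combination (-1 : ℝ) ^ r * hchooseR
    + (n.descFactorial (m + r) * (m + r).choose m : ℝ) * hsign

lemma sum_powLaguerreCoeff_mul_laguerreCoeff (b : ℕ) {m n : ℕ} (hmn : m ≤ n) :
    ∑ j ∈ range (n + 1), powLaguerreCoeff b n j * laguerreCoeff b j m
      = if m = n then 1 else 0 := by
  have halt := congrArg (Int.cast : ℤ → ℝ) (Int.alternating_sum_range_choose (n := n - m))
  push_cast at halt
  rw [show n + 1 = m + (n - m + 1) by omega, sum_range_add, sum_eq_zero fun j hj => ?_, zero_add]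
  · simp_rw [powLaguerreCoeff_mul_laguerreCoeff]
    rw [← mul_sum, halt]
    by_cases hm : m = n
    · subst hm
      simp only [Nat.sub_self, if_true, Nat.choose_self, Nat.cast_one, mul_one]
      rw [add_comm m b, div_self (by positivity)]
    · rw [if_neg (by omega), if_neg hm, mul_zero]
  · rw [laguerreCoeff, Nat.choose_eq_zero_of_lt (mem_range.mp hj)]
    simp

lemma sum_powLaguerreCoeff_mul_laguerre (b n : ℕ) {x : ℝ} (hx : 0 < x) :
    ∑ j ∈ range (n + 1), powLaguerreCoeff b n j * laguerre b j x = x ^ n := by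
  rw [sum_mul_laguerre_eq_sum_pow b _ _ hx,
    sum_congr rfl fun m hm => by rw [sum_powLaguerreCoeff_mul_laguerreCoeff b
      (Nat.lt_succ_iff.mp (mem_range.mp hm))]]
  simp

lemma sum_Icc_powLaguerreCoeff_mul_laguerre (b : ℕ) {m n : ℕ} (hmn : m ≤ n + 1) {x : ℝ}
    (hx : 0 < x) :
    ∑ j ∈ Icc m n, powLaguerreCoeff b n j * laguerre b j x
      = x ^ n + ∑ i ∈ range m,
          (-∑ j ∈ range m, powLaguerreCoeff b n j * laguerreCoeff b j i) * x ^ i := by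
  have hsplit := sum_range_add_sum_Ico (fun j => powLaguerreCoeff b n j * laguerre b j x) hmn
  rw [sum_powLaguerreCoeff_mul_laguerre b n hx, sum_mul_laguerre_eq_sum_pow b _ _ hx] at hsplit
  rw [← Ico_add_one_right_eq_Icc]
  simp only [neg_mul, sum_neg_distrib]
  linarith

lemma poch_neg_natCast (n k : ℕ) :
    poch (-(n : ℝ)) k = (-1) ^ k * (n.descFactorial k : ℝ) := by
  rw [← descPochhammer_eval_eq_descFactorial, descPochhammer_eval_eq_prod_range, poch]
  calc ∏ i ∈ range k, (-(n : ℝ) + i) = ∏ i ∈ range k, (-1) * ((n : ℝ) - i) :=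
        prod_congr rfl fun i _ => by ring
    _ = _ := by rw [prod_mul_distrib, prod_const, card_range]

lemma Gamma_mul_poch_div_Gamma {M : ℝ} {b n : ℕ} (hM : M = n + b + 1) (j : ℕ) :
    Real.Gamma M * (poch (-(n : ℝ)) j / Real.Gamma (M - n + j)) = powLaguerreCoeff b n j := by
  rw [show M = (n + b : ℕ) + 1 by rw [hM]; push_cast; ring,
    show ((n + b : ℕ) : ℝ) + 1 - n + j = (b + j : ℕ) + 1 by push_cast; ring,
    Real.Gamma_nat_eq_factorial, Real.Gamma_nat_eq_factorial, poch_neg_natCast, powLaguerreCoeff]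
  ring

theorem biorthogonal_partner_D_general (N Y : ℕ) (M : ℤ) (K : ℕ)
    (hK : K = N + Y - 1) (hM : (K : ℤ) < M) :
    (∃ a : ℕ → ℝ, ∀ t ∈ Set.Ioi (0:ℝ),
        Real.Gamma (M : ℝ) * ∑ j ∈ Finset.Icc (N - 1) K,
            poch (-(K : ℝ)) j / Real.Gamma ((M : ℝ) - K + j) *
              laguerre ((M : ℝ) - K - 1) j t
          = t ^ K + ∑ i ∈ Finset.range (N - 1), a i * t ^ i)
    ∧ (∀ j : ℕ, j < N - 1 →
        (∫ t in Set.Ioi (0:ℝ),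
            ((-1 : ℝ) ^ j * (j.factorial : ℝ) * laguerre ((M : ℝ) - K - 1) j t) *
            (Real.Gamma (M : ℝ) * ∑ i ∈ Finset.Icc (N - 1) K,
                poch (-(K : ℝ)) i / Real.Gamma ((M : ℝ) - K + i) *
                  laguerre ((M : ℝ) - K - 1) i t) *
            (t ^ ((M : ℝ) - K - 1) * Real.exp (-t))) = 0)
    ∧ (∫ t in Set.Ioi (0:ℝ),
          ((-1 : ℝ) ^ (N - 1) * ((N - 1).factorial : ℝ) *
              laguerre ((M : ℝ) - K - 1) (N - 1) t) *
          (Real.Gamma (M : ℝ) * ∑ i ∈ Finset.Icc (N - 1) K,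
              poch (-(K : ℝ)) i / Real.Gamma ((M : ℝ) - K + i) *
                laguerre ((M : ℝ) - K - 1) i t) *
          (t ^ ((M : ℝ) - K - 1) * Real.exp (-t)))
        = (-1 : ℝ) ^ (N - 1) * Real.Gamma (M : ℝ) * poch (-(K : ℝ)) (N - 1) := by
  obtain ⟨b, hb⟩ : ∃ b : ℕ, M = K + b + 1 := ⟨(M - K - 1).toNat, by omega⟩
  have hMb : (M : ℝ) = K + b + 1 := by rw [hb]; push_cast; ring
  have hα : (M : ℝ) - K - 1 = b := by rw [hMb]; ring
  have hD (t : ℝ) : Real.Gamma M * ∑ j ∈ Icc (N - 1) K,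
        poch (-(K : ℝ)) j / Real.Gamma ((M : ℝ) - K + j) * laguerre ((M : ℝ) - K - 1) j t
      = ∑ j ∈ Icc (N - 1) K, powLaguerreCoeff b K j * laguerre b j t := by
    rw [mul_sum, hα]
    exact sum_congr rfl fun j _ => by rw [← mul_assoc, Gamma_mul_poch_div_Gamma hMb]
  have hpair (j : ℕ) : ∫ t in Set.Ioi (0 : ℝ), ((-1 : ℝ) ^ j * j.factorial * laguerre b j t)
        * (∑ i ∈ Icc (N - 1) K, powLaguerreCoeff b K i * laguerre b i t)
        * (t ^ b * Real.exp (-t))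
      = (-1) ^ j * j.factorial
          * if j ∈ Icc (N - 1) K then powLaguerreCoeff b K j * ((j + b).factorial / j.factorial)
            else 0 := by
    rw [← integral_laguerre_mul_sum_mul_weight, ← integral_const_mul]
    exact setIntegral_congr_fun measurableSet_Ioi fun t _ => by ring
  simp only [hD]
  simp only [hα, Real.rpow_natCast, hpair]
  refine ⟨⟨_, fun t ht => sum_Icc_powLaguerreCoeff_mul_laguerre b (by omega) ht⟩,
    fun j hj => ?_, ?_⟩
  · rw [if_neg (by simp only [mem_Icc]; omega), mul_zero]
  · have hΓM : Real.Gamma M = (K + b).factorial := by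
      rw [hMb]; exact_mod_cast Real.Gamma_nat_eq_factorial (K + b)
    rw [if_pos (mem_Icc.mpr ⟨le_rfl, by omega⟩), hΓM, poch_neg_natCast, powLaguerreCoeff,
      add_comm b]
    field_simp

/-- With `K = N + Y − 1`, `M > K`, `α = M − K − 1` and the weight
`w(t) = t^α e^{-t}`, the polynomial
`D_{N-1}(t) = Γ(M) ∑_{j=N-1}^K [(-K)_j / Γ(M−K+j)] L_j^{(α)}(t)` is
(1) a monic polynomial of degree `K` which is a linear combination of `1, t, …, t^{N-2}, t^K`;
(2) orthogonal to the monic Laguerre polynomials `C_j = (-1)^j j! L_j^{(α)}` for `j < N-1`;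
(3) and its pairing with `C_{N-1} = (-1)^{N-1}(N-1)! L_{N-1}^{(α)}` is
`h_{N-1} = (-1)^{N-1} Γ(M) (-K)_{N-1}`. -/
theorem biorthogonal_partner_D (N Y : ℕ) (hN : 1 ≤ N) (M : ℤ) (K : ℕ)
    (hK : K = N + Y - 1) (hM : (K : ℤ) < M) :
    (∃ a : ℕ → ℝ, ∀ t ∈ Set.Ioi (0:ℝ),
        Real.Gamma (M : ℝ) * ∑ j ∈ Finset.Icc (N - 1) K,
            poch (-(K : ℝ)) j / Real.Gamma ((M : ℝ) - K + j) *
              laguerre ((M : ℝ) - K - 1) j t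
          = t ^ K + ∑ i ∈ Finset.range (N - 1), a i * t ^ i)
    ∧ (∀ j : ℕ, j < N - 1 →
        (∫ t in Set.Ioi (0:ℝ),
            ((-1 : ℝ) ^ j * (j.factorial : ℝ) * laguerre ((M : ℝ) - K - 1) j t) *
            (Real.Gamma (M : ℝ) * ∑ i ∈ Finset.Icc (N - 1) K,
                poch (-(K : ℝ)) i / Real.Gamma ((M : ℝ) - K + i) *
                  laguerre ((M : ℝ) - K - 1) i t) *
            (t ^ ((M : ℝ) - K - 1) * Real.exp (-t))) = 0)
    ∧ (∫ t in Set.Ioi (0:ℝ),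
          ((-1 : ℝ) ^ (N - 1) * ((N - 1).factorial : ℝ) *
              laguerre ((M : ℝ) - K - 1) (N - 1) t) *
          (Real.Gamma (M : ℝ) * ∑ i ∈ Finset.Icc (N - 1) K,
              poch (-(K : ℝ)) i / Real.Gamma ((M : ℝ) - K + i) *
                laguerre ((M : ℝ) - K - 1) i t) *
          (t ^ ((M : ℝ) - K - 1) * Real.exp (-t)))
        = (-1 : ℝ) ^ (N - 1) * Real.Gamma (M : ℝ) * poch (-(K : ℝ)) (N - 1) :=
  biorthogonal_partner_D_general N Y M K hK hM
end
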